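/- arXiv:2305.13134 — 9 statements merged into one kernel-verified Lean document; each statement's English description precedes it below -/
import Mathlib

section
/- Let f₁, f₂ : ℝⁿ → ℝ be differentiable, σ₁- and σ₂-strongly convex with distinct minimizers x₁*, x₂*, and suppose x ∉ {x₁*, x₂*} is a minimizer of f₁ + f₂ with ‖∇f₁(x)‖ = ‖∇f₂(x)‖ ≤ L. Define φ̃ᵢ(x) = arccos((σᵢ/L)‖x - xᵢ*‖) and let ψ(x) be the angle between the vectors x - x₁* and -(x - x₂*). Then φ̃₁(x) + φ̃₂(x) ≥ ψ(x). -/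
open InnerProductGeometry Real

/-!
Strong convexity at the minimiser `xᵢ*` gives `σᵢ‖x - xᵢ*‖² ≤ ⟨∇fᵢ(x), x - xᵢ*⟩`; with
`‖∇fᵢ(x)‖ ≤ L` this bounds the cosine of the angle between `x - xᵢ*` and `∇fᵢ(x)` from
below by `(σᵢ/L)‖x - xᵢ*‖`. Hence, for `g = ∇f₁(x) = -∇f₂(x)`, `∠(x - x₁*, g) ≤ φ̃₁(x)`
and `∠(g, -(x - x₂*)) ≤ φ̃₂(x)`, and the triangle inequality for angles through `g`
concludes.
-/

/-- A differentiable function `f : ℝⁿ → ℝ` is `σ`-strongly convex if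
`⟨∇f(x) - ∇f(y), x - y⟩ ≥ σ‖x - y‖²` for all `x, y`. -/
def StronglyConvex {n : ℕ} (σ : ℝ) (f : EuclideanSpace ℝ (Fin n) → ℝ) : Prop :=
  ∀ x y : EuclideanSpace ℝ (Fin n),
    σ * ‖x - y‖ ^ 2 ≤ (inner ℝ (gradient f x - gradient f y) (x - y) : ℝ)

theorem StronglyConvex.mul_norm_sq_le_inner_gradient {n : ℕ} {σ : ℝ}
    {f : EuclideanSpace ℝ (Fin n) → ℝ} (hf : StronglyConvex σ f)
    {xs : EuclideanSpace ℝ (Fin n)} (hxs : gradient f xs = 0) (x : EuclideanSpace ℝ (Fin n)) :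
    σ * ‖x - xs‖ ^ 2 ≤ inner ℝ (gradient f x) (x - xs) := by
  simpa [hxs] using hf x xs

theorem InnerProductGeometry.angle_le_arccos_of_mul_norm_sq_le_inner
    {V : Type*} [NormedAddCommGroup V] [InnerProductSpace ℝ V] {u g : V} {σ L : ℝ}
    (hσ : 0 < σ) (hinner : σ * ‖u‖ ^ 2 ≤ inner ℝ g u) (hg : ‖g‖ ≤ L) :
    angle u g ≤ arccos (σ / L * ‖u‖) := by
  rw [angle, real_inner_comm]
  apply arccos_le_arccos
  rcases (mul_nonneg (norm_nonneg u) (norm_nonneg g)).eq_or_lt with hzero | hpos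
  · -- the cosine takes the junk value `0 / 0 = 0`, so we need `u = 0`
    have hσu : σ * ‖u‖ ^ 2 ≤ 0 := by linarith [real_inner_le_norm g u, mul_comm ‖g‖ ‖u‖]
    have hu : u = 0 := by simpa using nonpos_of_mul_nonpos_right hσu hσ
    simp [hu]
  · have hL : 0 < L := (pos_of_mul_pos_right hpos (norm_nonneg u)).trans_le hg
    rw [le_div_iff₀ hpos]
    calc σ / L * ‖u‖ * (‖u‖ * ‖g‖) = σ * ‖u‖ ^ 2 * (‖g‖ / L) := by ring
      _ ≤ σ * ‖u‖ ^ 2 * 1 := by gcongr; exact (div_le_one hL).mpr hg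
      _ ≤ inner ℝ g u := by rw [mul_one]; exact hinner

theorem stmt_5_general {n : ℕ} (σ₁ σ₂ L : ℝ) (h1 : 0 < σ₁) (h2 : 0 < σ₂)
    (f₁ f₂ : EuclideanSpace ℝ (Fin n) → ℝ)
    (hc1 : StronglyConvex σ₁ f₁) (hc2 : StronglyConvex σ₂ f₂)
    (x₁s x₂s : EuclideanSpace ℝ (Fin n))
    (hm1 : gradient f₁ x₁s = 0) (hm2 : gradient f₂ x₂s = 0)
    (x : EuclideanSpace ℝ (Fin n))
    (hgrad : gradient f₁ x = -gradient f₂ x)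
    (hbound : ‖gradient f₁ x‖ ≤ L) :
    InnerProductGeometry.angle (x - x₁s) (-(x - x₂s)) ≤
      Real.arccos (σ₁ / L * ‖x - x₁s‖) + Real.arccos (σ₂ / L * ‖x - x₂s‖) := by
  set g := gradient f₁ x
  have ha1 : angle (x - x₁s) g ≤ arccos (σ₁ / L * ‖x - x₁s‖) :=
    angle_le_arccos_of_mul_norm_sq_le_inner h1
      (hc1.mul_norm_sq_le_inner_gradient hm1 x) hbound
  have ha2 : angle g (-(x - x₂s)) ≤ arccos (σ₂ / L * ‖x - x₂s‖) := by
    have hinner := hc2.mul_norm_sq_le_inner_gradient hm2 x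
    rw [← neg_neg (gradient f₂ x), ← hgrad] at hinner
    rw [← angle_neg_neg, neg_neg, angle_comm]
    exact angle_le_arccos_of_mul_norm_sq_le_inner h2 hinner (by rwa [norm_neg])
  linarith [angle_le_angle_add_angle (x - x₁s) g (-(x - x₂s))]

/-- Let `f₁, f₂ : ℝⁿ → ℝ` be differentiable, `σ₁`- and `σ₂`-strongly convex with
distinct minimizers `x₁*, x₂*`, and suppose `x ∉ {x₁*, x₂*}` is a minimizer of `f₁ + f₂`
with `‖∇f₁(x)‖ = ‖∇f₂(x)‖ ≤ L`.  With `φ̃ᵢ(x) = arccos((σᵢ/L)‖x - xᵢ*‖)` and `ψ(x)` the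
angle between `x - x₁*` and `-(x - x₂*)`, we have `φ̃₁(x) + φ̃₂(x) ≥ ψ(x)`. -/
theorem stmt_5 {n : ℕ} (σ₁ σ₂ L : ℝ) (h1 : 0 < σ₁) (h2 : 0 < σ₂) (hL : 0 < L)
    (f₁ f₂ : EuclideanSpace ℝ (Fin n) → ℝ)
    (hd1 : Differentiable ℝ f₁) (hd2 : Differentiable ℝ f₂)
    (hc1 : StronglyConvex σ₁ f₁) (hc2 : StronglyConvex σ₂ f₂)
    (x₁s x₂s : EuclideanSpace ℝ (Fin n)) (hne : x₁s ≠ x₂s)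
    (hm1 : gradient f₁ x₁s = 0) (hm2 : gradient f₂ x₂s = 0)
    (x : EuclideanSpace ℝ (Fin n)) (hx1 : x ≠ x₁s) (hx2 : x ≠ x₂s)
    (hgrad : gradient f₁ x = -gradient f₂ x)
    (hbound : ‖gradient f₁ x‖ ≤ L) :
    InnerProductGeometry.angle (x - x₁s) (-(x - x₂s)) ≤
      Real.arccos (σ₁ / L * ‖x - x₁s‖) + Real.arccos (σ₂ / L * ‖x - x₂s‖) :=
  stmt_5_general σ₁ σ₂ L h1 h2 f₁ f₂ hc1 hc2 x₁s x₂s hm1 hm2 x hgrad hbound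
end

section
/- Fix r > 0, σ₁, σ₂, L > 0, and set x₁* = (-r, 0, …, 0), x₂* = (r, 0, …, 0) in ℝⁿ. Write x = (x₁, x̃) with x̃ ∈ ℝ^{n-1}, d₁(x) = ‖x - x₁*‖, d₂(x) = ‖x - x₂*‖, φ̃ᵢ(x) = arccos((σᵢ/L)dᵢ(x)) (defined when dᵢ(x) ≤ L/σᵢ), αᵢ(x) = ∠(x - xᵢ*, x₂* - x₁*), ψ(x) = π - (α₂(x) - α₁(x)). Then for x in the intersection of the closed balls B̄(xᵢ*, L/σᵢ) with x ∉ {x₁*, x₂*}, the equation φ̃₁(x) + φ̃₂(x) = ψ(x) holds if and only if (‖x‖² - r²)/(d₁(x)²·d₂(x)²) + σ₁σ₂/L² = √(1/d₁(x)² - σ₁²/L²)·√(1/d₂(x)² - σ₂²/L²). -/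
/-!
Since `(x - x₁*) - (x - x₂*) = x₂* - x₁*`, the angle sum of the triangle `x₁* x₂* x` gives
`α₂ - α₁ = ∠(x - x₁*, x - x₂*) =: γ`, so `ψ = π - γ`. Both `φ̃₁ + φ̃₂` and `π - γ` lie in `[0, π]`,
where `cos` is injective, so the equation is equivalent to its cosine. Expanding
`cos (arccos a + arccos b) = ab - √(1 - a²)√(1 - b²)`, using
`cos γ = ⟪x - x₁*, x + x₁*⟫ / (d₁d₂) = (‖x‖² - r²) / (d₁d₂)` and dividing by `d₁d₂` gives the
stated identity.
-/

open Real InnerProductGeometry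
open scoped RealInnerProductSpace

theorem div_mul_le_one_of_le_div {σ L d : ℝ} (hσ : 0 < σ) (hL : 0 < L) (h : d ≤ L / σ) :
    σ / L * d ≤ 1 := by
  rw [div_mul_eq_mul_div, div_le_one hL]
  rwa [le_div_iff₀' hσ] at h

theorem Real.sqrt_one_div_sq_sub_div_sq {d : ℝ} (hd : 0 < d) (σ L : ℝ) :
    √(1 / d ^ 2 - σ ^ 2 / L ^ 2) = √(1 - (σ / L * d) ^ 2) / d := by
  rw [← sqrt_sq hd.le, ← sqrt_div' _ (sq_nonneg d), sqrt_sq hd.le]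
  congr 1
  field_simp

theorem Real.arccos_add_arccos_eq_iff {a b θ : ℝ} (ha₀ : 0 ≤ a) (ha₁ : a ≤ 1) (hb₀ : 0 ≤ b)
    (hb₁ : b ≤ 1) (hθ : θ ∈ Set.Icc 0 π) :
    arccos a + arccos b = θ ↔ a * b - √(1 - a ^ 2) * √(1 - b ^ 2) = cos θ := by
  have hsum : arccos a + arccos b ∈ Set.Icc 0 π :=
    ⟨add_nonneg (arccos_nonneg a) (arccos_nonneg b),
      by linarith [arccos_le_pi_div_two.mpr ha₀, arccos_le_pi_div_two.mpr hb₀]⟩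
  rw [← injOn_cos.eq_iff hsum hθ, cos_add, cos_arccos (by linarith) ha₁,
    cos_arccos (by linarith) hb₁, sin_arccos, sin_arccos]

section InnerProductSpace

variable {V : Type*} [NormedAddCommGroup V] [InnerProductSpace ℝ V]

theorem real_inner_sub_add_eq_norm_sq_sub_norm_sq (x y : V) :
    ⟪x - y, x + y⟫ = ‖x‖ ^ 2 - ‖y‖ ^ 2 := by
  rw [inner_sub_left, inner_add_right, inner_add_right, real_inner_comm y x,
    real_inner_self_eq_norm_sq, real_inner_self_eq_norm_sq]
  ring

theorem InnerProductGeometry.angle_sub_sub_angle_sub_eq_angle (u : V) {v : V} (hv : v ≠ 0) :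
    angle v (u - v) - angle u (u - v) = angle u v := by
  have h := angle_add_angle_sub_add_angle_sub_eq_pi u hv
  rw [← neg_sub u v, angle_neg_right] at h
  linarith

end InnerProductSpace

theorem stmt_7_general {n : ℕ} (r σ₁ σ₂ L : ℝ) (h1 : 0 < σ₁) (h2 : 0 < σ₂) (hL : 0 < L)
    (x₁s x₂s : EuclideanSpace ℝ (Fin (n + 1)))
    (hx1 : x₁s = EuclideanSpace.single 0 (-r)) (hx2 : x₂s = EuclideanSpace.single 0 r)
    (x : EuclideanSpace ℝ (Fin (n + 1)))
    (hb1 : ‖x - x₁s‖ ≤ L / σ₁) (hb2 : ‖x - x₂s‖ ≤ L / σ₂)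
    (hne1 : x ≠ x₁s) (hne2 : x ≠ x₂s) :
    (Real.arccos (σ₁ / L * ‖x - x₁s‖) + Real.arccos (σ₂ / L * ‖x - x₂s‖) =
        Real.pi - (InnerProductGeometry.angle (x - x₂s) (x₂s - x₁s) -
          InnerProductGeometry.angle (x - x₁s) (x₂s - x₁s))) ↔
      (‖x‖ ^ 2 - r ^ 2) / (‖x - x₁s‖ ^ 2 * ‖x - x₂s‖ ^ 2) + σ₁ * σ₂ / L ^ 2 =
        Real.sqrt (1 / ‖x - x₁s‖ ^ 2 - σ₁ ^ 2 / L ^ 2) *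
          Real.sqrt (1 / ‖x - x₂s‖ ^ 2 - σ₂ ^ 2 / L ^ 2) := by
  have hd₁ : 0 < ‖x - x₁s‖ := norm_pos_iff.mpr (sub_ne_zero.mpr hne1)
  have hd₂ : 0 < ‖x - x₂s‖ := norm_pos_iff.mpr (sub_ne_zero.mpr hne2)
  have hx₂ : x₂s = -x₁s := by simp only [hx1, hx2, EuclideanSpace.single, PiLp.single_neg, neg_neg]
  have hinner : ⟪x - x₁s, x - x₂s⟫ = ‖x‖ ^ 2 - r ^ 2 := by
    rw [hx₂, sub_neg_eq_add, real_inner_sub_add_eq_norm_sq_sub_norm_sq, hx1,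
      PiLp.norm_single, norm_neg, norm_eq_abs, sq_abs]
  have hψ : angle (x - x₂s) (x₂s - x₁s) - angle (x - x₁s) (x₂s - x₁s) =
      angle (x - x₁s) (x - x₂s) := by
    rw [← sub_sub_sub_cancel_left x₁s x₂s x]
    exact angle_sub_sub_angle_sub_eq_angle _ (sub_ne_zero.mpr hne2)
  have hθ : π - angle (x - x₁s) (x - x₂s) ∈ Set.Icc 0 π :=
    ⟨by linarith [angle_le_pi (x - x₁s) (x - x₂s)], by linarith [angle_nonneg (x - x₁s) (x - x₂s)]⟩
  rw [hψ, arccos_add_arccos_eq_iff (by positivity) (div_mul_le_one_of_le_div h1 hL hb1)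
      (by positivity) (div_mul_le_one_of_le_div h2 hL hb2) hθ,
    cos_pi_sub, cos_angle, hinner, sqrt_one_div_sq_sub_div_sq hd₁, sqrt_one_div_sq_sub_div_sq hd₂]
  constructor <;> intro h <;> field_simp at h ⊢ <;> linarith

/-- With `x₁* = (-r,0,…,0)`, `x₂* = (r,0,…,0)`, `dᵢ(x) = ‖x - xᵢ*‖`,
`φ̃ᵢ(x) = arccos((σᵢ/L)dᵢ(x))`, `αᵢ(x) = ∠(x - xᵢ*, x₂* - x₁*)` and
`ψ(x) = π - (α₂(x) - α₁(x))`: for `x` in the intersection of the closed balls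
`B̄(xᵢ*, L/σᵢ)` with `x ∉ {x₁*, x₂*}`, the equation `φ̃₁(x) + φ̃₂(x) = ψ(x)` holds iff
`(‖x‖² - r²)/(d₁²d₂²) + σ₁σ₂/L² = √(1/d₁² - σ₁²/L²)·√(1/d₂² - σ₂²/L²)`. -/
theorem stmt_7 {n : ℕ} (r σ₁ σ₂ L : ℝ) (hr : 0 < r) (h1 : 0 < σ₁) (h2 : 0 < σ₂) (hL : 0 < L)
    (x₁s x₂s : EuclideanSpace ℝ (Fin (n + 1)))
    (hx1 : x₁s = EuclideanSpace.single 0 (-r)) (hx2 : x₂s = EuclideanSpace.single 0 r)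
    (x : EuclideanSpace ℝ (Fin (n + 1)))
    (hb1 : ‖x - x₁s‖ ≤ L / σ₁) (hb2 : ‖x - x₂s‖ ≤ L / σ₂)
    (hne1 : x ≠ x₁s) (hne2 : x ≠ x₂s) :
    (Real.arccos (σ₁ / L * ‖x - x₁s‖) + Real.arccos (σ₂ / L * ‖x - x₂s‖) =
        Real.pi - (InnerProductGeometry.angle (x - x₂s) (x₂s - x₁s) -
          InnerProductGeometry.angle (x - x₁s) (x₂s - x₁s))) ↔
      (‖x‖ ^ 2 - r ^ 2) / (‖x - x₁s‖ ^ 2 * ‖x - x₂s‖ ^ 2) + σ₁ * σ₂ / L ^ 2 =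
        Real.sqrt (1 / ‖x - x₁s‖ ^ 2 - σ₁ ^ 2 / L ^ 2) *
          Real.sqrt (1 / ‖x - x₂s‖ ^ 2 - σ₂ ^ 2 / L ^ 2) :=
  stmt_7_general r σ₁ σ₂ L h1 h2 hL x₁s x₂s hx1 hx2 x hb1 hb2 hne1 hne2
end

section
/- Fix r > 0 and set x₁* = (-r, 0, …, 0), x₂* = (r, 0, …, 0) in ℝⁿ. Let x = (x₁, x̃), y = (y₁, ỹ) with -r ≤ x₁ = y₁ ≤ r and ‖x̃‖ > ‖ỹ‖, and let φ̃ᵢ, ψ be as defined from parameters σ₁, σ₂, L (with x, y in the domain where the arccos expressions are defined). If φ̃₁(x) + φ̃₂(x) ≥ ψ(x), then either φ̃₁(y) + φ̃₂(y) > ψ(y) or y ∈ {x₁*, x₂*}. -/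
/-!
Fixing the first coordinate and shrinking the transverse part `x̃` brings the point closer to
both centres `xᵢ*`, so each `φ̃ᵢ` strictly increases (arccos is strictly decreasing on `[-1, 1]`).
Meanwhile `αᵢ = arccos ((x₁ ∓ r) / ‖x - xᵢ*‖)`; as `x₁ + r ≥ 0 ≥ x₁ - r`, shrinking the
distances decreases `α₁` and increases `α₂`, so `ψ` does not increase.
-/

open InnerProductGeometry Real

theorem div_le_div_of_nonneg_of_le_left {p s t : ℝ} (hp : 0 ≤ p) (hps : p ≤ s) (hst : s ≤ t) :
    p / t ≤ p / s := by
  rcases hp.eq_or_lt with rfl | hp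
  · simp
  · exact div_le_div_of_nonneg_left hp.le (hp.trans_le hps) hst

theorem arccos_div_mul_lt_arccos_div_mul {σ L s t : ℝ} (hσ : 0 < σ) (hL : 0 < L) (hs : 0 ≤ s)
    (hst : s < t) (ht : t ≤ L / σ) : arccos (σ / L * t) < arccos (σ / L * s) := by
  have hk : 0 < σ / L := div_pos hσ hL
  refine arccos_lt_arccos (by nlinarith) (mul_lt_mul_of_pos_left hst hk) ?_
  calc σ / L * t ≤ σ / L * (L / σ) := mul_le_mul_of_nonneg_left ht hk.le
    _ = 1 := by field_simp

namespace EuclideanSpace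

variable {ι : Type*} [Fintype ι] [DecidableEq ι]

theorem norm_sub_single_sq (u : EuclideanSpace ℝ ι) (i : ι) (c : ℝ) :
    ‖u - single i c‖ ^ 2 = (u i - c) ^ 2 + ‖u - single i (u i)‖ ^ 2 := by
  have hsplit : u - single i c = single i (u i - c) + (u - single i (u i)) := by
    ext j
    by_cases hj : j = i <;> simp [hj]
  have horth : inner ℝ (single i (u i - c)) (u - single i (u i)) = 0 := by
    simp [inner_single_left]
  rw [hsplit, norm_add_sq_real, horth, PiLp.norm_single, norm_eq_abs, sq_abs]
  ring

theorem norm_sub_single_lt_of_apply_eq {u v : EuclideanSpace ℝ ι} {i : ι} (hi : v i = u i)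
    (htail : ‖v - single i (v i)‖ < ‖u - single i (u i)‖) (c : ℝ) :
    ‖v - single i c‖ < ‖u - single i c‖ := by
  have hsq : ‖v - single i c‖ ^ 2 < ‖u - single i c‖ ^ 2 := by
    have := pow_lt_pow_left₀ htail (norm_nonneg _) two_ne_zero
    rw [norm_sub_single_sq v, norm_sub_single_sq u]
    rw [hi] at this ⊢
    linarith
  exact lt_of_pow_lt_pow_left₀ 2 (norm_nonneg _) hsq

theorem angle_single_of_pos (u : EuclideanSpace ℝ ι) (i : ι) {b : ℝ} (hb : 0 < b) :
    angle u (single i b) = arccos (u i / ‖u‖) := by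
  rw [angle, real_inner_comm, inner_single_left, PiLp.norm_single, norm_eq_abs, abs_of_pos hb,
    conj_trivial, mul_comm b, mul_div_mul_right _ _ hb.ne']

theorem angle_sub_single_le_of_le {u v : EuclideanSpace ℝ ι} {i : ι} (hi : v i = u i)
    (htail : ‖v - single i (v i)‖ < ‖u - single i (u i)‖) {b c : ℝ} (hb : 0 < b)
    (hc : c ≤ u i) :
    angle (v - single i c) (single i b) ≤ angle (u - single i c) (single i b) := by
  rw [angle_single_of_pos _ _ hb, angle_single_of_pos _ _ hb]
  refine arccos_le_arccos ?_
  have hcoord : u i - c ≤ ‖v - single i c‖ := by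
    simpa [hi] using (le_abs_self _).trans (PiLp.norm_apply_le (v - single i c) i)
  simpa [hi] using div_le_div_of_nonneg_of_le_left (sub_nonneg.2 hc) hcoord
    (norm_sub_single_lt_of_apply_eq hi htail c).le

theorem angle_sub_single_le_of_ge {u v : EuclideanSpace ℝ ι} {i : ι} (hi : v i = u i)
    (htail : ‖v - single i (v i)‖ < ‖u - single i (u i)‖) {b c : ℝ} (hb : 0 < b)
    (hc : u i ≤ c) :
    angle (u - single i c) (single i b) ≤ angle (v - single i c) (single i b) := by
  rw [angle_single_of_pos _ _ hb, angle_single_of_pos _ _ hb]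
  refine arccos_le_arccos ?_
  have hcoord : c - u i ≤ ‖v - single i c‖ := by
    simpa [hi] using (neg_le_abs _).trans (PiLp.norm_apply_le (v - single i c) i)
  have := div_le_div_of_nonneg_of_le_left (sub_nonneg.2 hc) hcoord
    (norm_sub_single_lt_of_apply_eq hi htail c).le
  rw [← neg_sub, neg_div, neg_div, neg_le_neg_iff] at this
  simpa [hi] using this

end EuclideanSpace

theorem stmt_8_general {n : ℕ} (r σ₁ σ₂ L : ℝ) (hr : 0 < r) (h1 : 0 < σ₁) (h2 : 0 < σ₂) (hL : 0 < L)
    (x₁s x₂s : EuclideanSpace ℝ (Fin (n + 1)))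
    (hx1 : x₁s = EuclideanSpace.single 0 (-r)) (hx2 : x₂s = EuclideanSpace.single 0 r)
    (x y : EuclideanSpace ℝ (Fin (n + 1)))
    (hfirst : x 0 = y 0) (hlow : -r ≤ x 0) (hhigh : x 0 ≤ r)
    (htail : ‖y - EuclideanSpace.single 0 (y 0)‖ < ‖x - EuclideanSpace.single 0 (x 0)‖)
    (hbx1 : ‖x - x₁s‖ ≤ L / σ₁) (hbx2 : ‖x - x₂s‖ ≤ L / σ₂)
    (h : Real.pi - (InnerProductGeometry.angle (x - x₂s) (x₂s - x₁s) -
          InnerProductGeometry.angle (x - x₁s) (x₂s - x₁s)) ≤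
        Real.arccos (σ₁ / L * ‖x - x₁s‖) + Real.arccos (σ₂ / L * ‖x - x₂s‖)) :
    (Real.pi - (InnerProductGeometry.angle (y - x₂s) (x₂s - x₁s) -
          InnerProductGeometry.angle (y - x₁s) (x₂s - x₁s)) <
        Real.arccos (σ₁ / L * ‖y - x₁s‖) + Real.arccos (σ₂ / L * ‖y - x₂s‖)) ∨
      y = x₁s ∨ y = x₂s := by
  left
  subst hx1 hx2
  have hi : y 0 = x 0 := hfirst.symm
  have hdir : EuclideanSpace.single 0 r - EuclideanSpace.single 0 (-r) =
      (EuclideanSpace.single 0 (2 * r) : EuclideanSpace ℝ (Fin (n + 1))) := by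
    rw [← PiLp.single_sub]
    ring_nf
  have h2r : 0 < 2 * r := by positivity
  rw [hdir] at h ⊢
  have hα₁ := EuclideanSpace.angle_sub_single_le_of_le hi htail h2r hlow
  have hα₂ := EuclideanSpace.angle_sub_single_le_of_ge hi htail h2r hhigh
  have hφ₁ := arccos_div_mul_lt_arccos_div_mul h1 hL (norm_nonneg _)
    (EuclideanSpace.norm_sub_single_lt_of_apply_eq hi htail (-r)) hbx1
  have hφ₂ := arccos_div_mul_lt_arccos_div_mul h2 hL (norm_nonneg _)
    (EuclideanSpace.norm_sub_single_lt_of_apply_eq hi htail r) hbx2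
  linarith

/-- With `x₁* = (-r,0,…,0)`, `x₂* = (r,0,…,0)` in `ℝⁿ`, let `x = (x₁, x̃)`,
`y = (y₁, ỹ)` with `-r ≤ x₁ = y₁ ≤ r` and `‖x̃‖ > ‖ỹ‖`, both lying in the closed balls
where the arccos expressions are defined.  If `φ̃₁(x) + φ̃₂(x) ≥ ψ(x)`, then either
`φ̃₁(y) + φ̃₂(y) > ψ(y)` or `y ∈ {x₁*, x₂*}`.  Here `φ̃ᵢ(z) = arccos((σᵢ/L)‖z - xᵢ*‖)`,
`αᵢ(z) = ∠(z - xᵢ*, x₂* - x₁*)`, and `ψ(z) = π - (α₂(z) - α₁(z))`. -/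
theorem stmt_8 {n : ℕ} (r σ₁ σ₂ L : ℝ) (hr : 0 < r) (h1 : 0 < σ₁) (h2 : 0 < σ₂) (hL : 0 < L)
    (x₁s x₂s : EuclideanSpace ℝ (Fin (n + 1)))
    (hx1 : x₁s = EuclideanSpace.single 0 (-r)) (hx2 : x₂s = EuclideanSpace.single 0 r)
    (x y : EuclideanSpace ℝ (Fin (n + 1)))
    (hfirst : x 0 = y 0) (hlow : -r ≤ x 0) (hhigh : x 0 ≤ r)
    (htail : ‖y - EuclideanSpace.single 0 (y 0)‖ < ‖x - EuclideanSpace.single 0 (x 0)‖)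
    (hbx1 : ‖x - x₁s‖ ≤ L / σ₁) (hbx2 : ‖x - x₂s‖ ≤ L / σ₂)
    (hby1 : ‖y - x₁s‖ ≤ L / σ₁) (hby2 : ‖y - x₂s‖ ≤ L / σ₂)
    (h : Real.pi - (InnerProductGeometry.angle (x - x₂s) (x₂s - x₁s) -
          InnerProductGeometry.angle (x - x₁s) (x₂s - x₁s)) ≤
        Real.arccos (σ₁ / L * ‖x - x₁s‖) + Real.arccos (σ₂ / L * ‖x - x₂s‖)) :
    (Real.pi - (InnerProductGeometry.angle (y - x₂s) (x₂s - x₁s) -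
          InnerProductGeometry.angle (y - x₁s) (x₂s - x₁s)) <
        Real.arccos (σ₁ / L * ‖y - x₁s‖) + Real.arccos (σ₂ / L * ‖y - x₂s‖)) ∨
      y = x₁s ∨ y = x₂s :=
  stmt_8_general r σ₁ σ₂ L hr h1 h2 hL x₁s x₂s hx1 hx2 x y hfirst hlow hhigh htail hbx1 hbx2 h
end

section
/- With x₁* = (-r, 0, …, 0), x₂* = (r, 0, …, 0), parameters σ₁, σ₂, L > 0, γ₁ = L²/σ₁², β = σ₂/σ₁, and λ₁ = ((1+β)/(1+2β))·γ₁/(2r) - r/(1+2β): for any point x on the sphere ∂B(x₁*, L/σ₁) lying in B̄(x₁*, L/σ₁) ∩ B̄(x₂*, L/σ₂) \ {x₁*, x₂*}, the strict inequality φ̃₁(x) + φ̃₂(x) < ψ(x) holds if and only if the first coordinate x₁ < λ₁, and φ̃₁(x) + φ̃₂(x) > ψ(x) holds if and only if x₁ > λ₁. -/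
/-!
Since `x` lies on the first sphere, `φ̃₁(x) = 0`. By the exterior angle theorem in the triangle
`x₁* x x₂*`, `ψ(x)` is the angle between `x - x₁*` and `x₂* - x`, so comparing `φ̃₂(x)` with `ψ(x)`
amounts to comparing cosines, i.e. `⟪x - x₁*, x₂* - x⟫` with `β ‖x - x₂*‖²`. As `x₁* = -x₂*`,
the difference of these two quantities is `2r(1 + 2β)(x₁ - λ₁)`.
-/

open Real InnerProductGeometry
open scoped RealInnerProductSpace

theorem Real.arccos_lt_arccos_iff {x y : ℝ} (hx : -1 ≤ x) (hy : y ≤ 1) :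
    arccos y < arccos x ↔ x < y :=
  ⟨fun h => lt_of_not_ge fun hyx => h.not_ge (arccos_le_arccos hyx),
    fun h => arccos_lt_arccos hx h hy⟩

section InnerProductSpace

variable {V : Type*} [NormedAddCommGroup V] [InnerProductSpace ℝ V]

namespace InnerProductGeometry

theorem arccos_lt_angle_iff {u v : V} (hu : u ≠ 0) (hv : v ≠ 0) {t : ℝ} (ht : t ≤ 1) :
    arccos t < angle u v ↔ ⟪u, v⟫ < t * (‖u‖ * ‖v‖) := by
  rw [angle, arccos_lt_arccos_iff (abs_le.mp (abs_real_inner_div_norm_mul_norm_le_one u v)).1 ht,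
    div_lt_iff₀ (by positivity)]

theorem angle_lt_arccos_iff {u v : V} (hu : u ≠ 0) (hv : v ≠ 0) {t : ℝ} (ht : -1 ≤ t) :
    angle u v < arccos t ↔ t * (‖u‖ * ‖v‖) < ⟪u, v⟫ := by
  rw [angle, arccos_lt_arccos_iff ht (abs_le.mp (abs_real_inner_div_norm_mul_norm_le_one u v)).2,
    lt_div_iff₀ (by positivity)]

theorem angle_sub_sub_angle_sub_eq_angle_s9 (a : V) {b p : V} (hpb : p ≠ b) :
    angle (p - b) (b - a) - angle (p - a) (b - a) = angle (p - a) (p - b) := by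
  have h := angle_add_angle_sub_add_angle_sub_eq_pi (p - a) (sub_ne_zero.mpr hpb)
  rw [sub_sub_sub_cancel_left a b p, sub_sub_sub_cancel_left b a p, ← neg_sub b a,
    angle_neg_right] at h
  linarith

end InnerProductGeometry

theorem inner_add_sub_sub_mul_norm_sub_sq (x e : V) (β : ℝ) :
    ⟪x + e, e - x⟫ - β * ‖x - e‖ ^ 2 =
      2 * (1 + 2 * β) * ⟪x, e⟫ - ((1 + β) * ‖x + e‖ ^ 2 - 2 * ‖e‖ ^ 2) := by
  rw [norm_add_sq_real, norm_sub_sq_real, inner_add_left, inner_sub_right, inner_sub_right,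
    real_inner_self_eq_norm_sq, real_inner_self_eq_norm_sq, real_inner_comm e x]
  ring

end InnerProductSpace

theorem EuclideanSpace.inner_sub_single_neg_sub_mul_norm_sub_single_sq {ι : Type*} [Fintype ι]
    [DecidableEq ι] (x : EuclideanSpace ℝ ι) (i : ι) {r : ℝ} (hr : 0 ≤ r) (β : ℝ) :
    ⟪x - single i (-r), single i r - x⟫ - β * ‖x - single i r‖ ^ 2 =
      2 * (1 + 2 * β) * (r * x i) - ((1 + β) * ‖x - single i (-r)‖ ^ 2 - 2 * r ^ 2) := by
  rw [show single i (-r) = -single i r from PiLp.single_neg 2 i, sub_neg_eq_add, inner_add_sub_sub_mul_norm_sub_sq, inner_single_right,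
    conj_trivial, PiLp.norm_single, norm_of_nonneg hr]

theorem stmt_9_general {n : ℕ} (r σ₁ σ₂ L : ℝ) (hr : 0 < r) (h1 : 0 < σ₁) (h2 : 0 < σ₂) (hL : 0 < L)
    (x₁s x₂s : EuclideanSpace ℝ (Fin (n + 1)))
    (hx1 : x₁s = EuclideanSpace.single 0 (-r)) (hx2 : x₂s = EuclideanSpace.single 0 r)
    (x : EuclideanSpace ℝ (Fin (n + 1)))
    (hsph : ‖x - x₁s‖ = L / σ₁) (hb2 : ‖x - x₂s‖ ≤ L / σ₂)
    (hne2 : x ≠ x₂s) :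
    (Real.arccos (σ₁ / L * ‖x - x₁s‖) + Real.arccos (σ₂ / L * ‖x - x₂s‖) <
        Real.pi - (InnerProductGeometry.angle (x - x₂s) (x₂s - x₁s) -
          InnerProductGeometry.angle (x - x₁s) (x₂s - x₁s)) ↔
      x 0 < ((1 + σ₂ / σ₁) / (1 + 2 * (σ₂ / σ₁))) * (L ^ 2 / σ₁ ^ 2 / (2 * r)) -
        r / (1 + 2 * (σ₂ / σ₁))) ∧
    (Real.pi - (InnerProductGeometry.angle (x - x₂s) (x₂s - x₁s) -
          InnerProductGeometry.angle (x - x₁s) (x₂s - x₁s)) <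
        Real.arccos (σ₁ / L * ‖x - x₁s‖) + Real.arccos (σ₂ / L * ‖x - x₂s‖) ↔
      ((1 + σ₂ / σ₁) / (1 + 2 * (σ₂ / σ₁))) * (L ^ 2 / σ₁ ^ 2 / (2 * r)) -
        r / (1 + 2 * (σ₂ / σ₁)) < x 0) := by
  set β := σ₂ / σ₁ with hβ
  set lam := ((1 + β) / (1 + 2 * β)) * (L ^ 2 / σ₁ ^ 2 / (2 * r)) - r / (1 + 2 * β)
  have hu : x - x₁s ≠ 0 := norm_pos_iff.mp (hsph ▸ by positivity)
  have hv : x₂s - x ≠ 0 := sub_ne_zero.mpr hne2.symm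
  have hφ₁ : arccos (σ₁ / L * ‖x - x₁s‖) = 0 := by
    rw [hsph, div_mul_div_cancel₀ hL.ne', div_self h1.ne', arccos_one]
  have hψ : π - (angle (x - x₂s) (x₂s - x₁s) - angle (x - x₁s) (x₂s - x₁s)) =
      angle (x - x₁s) (x₂s - x) := by
    rw [angle_sub_sub_angle_sub_eq_angle_s9 x₁s hne2, ← neg_sub x x₂s, angle_neg_right]
  have ht : σ₂ / L * ‖x - x₂s‖ ≤ 1 :=
    calc σ₂ / L * ‖x - x₂s‖ ≤ σ₂ / L * (L / σ₂) := by gcongr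
      _ = 1 := by field_simp
  have hnorms : σ₂ / L * ‖x - x₂s‖ * (‖x - x₁s‖ * ‖x₂s - x‖) = β * ‖x - x₂s‖ ^ 2 := by
    rw [hsph, norm_sub_rev x₂s, hβ]
    field_simp
  have hsign : ⟪x - x₁s, x₂s - x⟫ - β * ‖x - x₂s‖ ^ 2 = 2 * r * (1 + 2 * β) * (x 0 - lam) := by
    have : 0 < 1 + 2 * β := by positivity
    rw [hx1, hx2, EuclideanSpace.inner_sub_single_neg_sub_mul_norm_sub_single_sq x 0 hr.le,
      ← hx1, hsph]
    simp only [lam]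
    field_simp
  have hc : 0 < 2 * r * (1 + 2 * β) := by positivity
  rw [hφ₁, zero_add, hψ, arccos_lt_angle_iff hu hv ht,
    angle_lt_arccos_iff hu hv (by linarith [show 0 ≤ σ₂ / L * ‖x - x₂s‖ by positivity]), hnorms]
  constructor <;> constructor <;> intro h <;> nlinarith

/-- With `x₁* = (-r,0,…,0)`, `x₂* = (r,0,…,0)`, `γ₁ = L²/σ₁²`, `β = σ₂/σ₁`,
`λ₁ = ((1+β)/(1+2β))·γ₁/(2r) - r/(1+2β)`: for any point `x` on the sphere
`∂B(x₁*, L/σ₁)` lying in `B̄(x₁*, L/σ₁) ∩ B̄(x₂*, L/σ₂) \ {x₁*, x₂*}`, the strict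
inequality `φ̃₁(x) + φ̃₂(x) < ψ(x)` holds iff the first coordinate `x₁ < λ₁`, and
`φ̃₁(x) + φ̃₂(x) > ψ(x)` holds iff `x₁ > λ₁`. -/
theorem stmt_9 {n : ℕ} (r σ₁ σ₂ L : ℝ) (hr : 0 < r) (h1 : 0 < σ₁) (h2 : 0 < σ₂) (hL : 0 < L)
    (x₁s x₂s : EuclideanSpace ℝ (Fin (n + 1)))
    (hx1 : x₁s = EuclideanSpace.single 0 (-r)) (hx2 : x₂s = EuclideanSpace.single 0 r)
    (x : EuclideanSpace ℝ (Fin (n + 1)))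
    (hsph : ‖x - x₁s‖ = L / σ₁) (hb2 : ‖x - x₂s‖ ≤ L / σ₂)
    (hne1 : x ≠ x₁s) (hne2 : x ≠ x₂s) :
    (Real.arccos (σ₁ / L * ‖x - x₁s‖) + Real.arccos (σ₂ / L * ‖x - x₂s‖) <
        Real.pi - (InnerProductGeometry.angle (x - x₂s) (x₂s - x₁s) -
          InnerProductGeometry.angle (x - x₁s) (x₂s - x₁s)) ↔
      x 0 < ((1 + σ₂ / σ₁) / (1 + 2 * (σ₂ / σ₁))) * (L ^ 2 / σ₁ ^ 2 / (2 * r)) -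
        r / (1 + 2 * (σ₂ / σ₁))) ∧
    (Real.pi - (InnerProductGeometry.angle (x - x₂s) (x₂s - x₁s) -
          InnerProductGeometry.angle (x - x₁s) (x₂s - x₁s)) <
        Real.arccos (σ₁ / L * ‖x - x₁s‖) + Real.arccos (σ₂ / L * ‖x - x₂s‖) ↔
      ((1 + σ₂ / σ₁) / (1 + 2 * (σ₂ / σ₁))) * (L ^ 2 / σ₁ ^ 2 / (2 * r)) -
        r / (1 + 2 * (σ₂ / σ₁)) < x 0) :=
  stmt_9_general r σ₁ σ₂ L hr h1 h2 hL x₁s x₂s hx1 hx2 x hsph hb2 hne2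
end

section
/- Let γ₁ = L²/σ₁², β = σ₂/σ₁ and λ₁ = ((1+β)/(1+2β))·γ₁/(2r) - r/(1+2β), for positive reals L, σ₁, σ₂, r. Then r ∈ (L/(2σ₁), (L/2)(1/σ₁ + 1/σ₂)) if and only if λ₁ < L/σ₁ - r. Moreover, if r ∈ (0, L/(2σ₁)], then λ₁ ≥ L/σ₁ - r with equality only if r = L/(2σ₁). -/
/-- Let `γ₁ = L²/σ₁²`, `β = σ₂/σ₁` and
`λ₁ = ((1+β)/(1+2β))·γ₁/(2r) - r/(1+2β)`, for positive reals `L, σ₁, σ₂, r`.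
Then `r ∈ (L/(2σ₁), (L/2)(1/σ₁ + 1/σ₂))` iff `λ₁ < L/σ₁ - r`.  Moreover, if
`r ∈ (0, L/(2σ₁)]`, then `λ₁ ≥ L/σ₁ - r` with equality only if `r = L/(2σ₁)`. -/
theorem stmt_10 (L σ₁ σ₂ r : ℝ) (hL : 0 < L) (h1 : 0 < σ₁) (h2 : 0 < σ₂) (hr : 0 < r) :
    ((L / (2 * σ₁) < r ∧ r < L / 2 * (1 / σ₁ + 1 / σ₂)) ↔
      ((1 + σ₂ / σ₁) / (1 + 2 * (σ₂ / σ₁))) * (L ^ 2 / σ₁ ^ 2 / (2 * r)) -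
          r / (1 + 2 * (σ₂ / σ₁)) < L / σ₁ - r) ∧
    (r ≤ L / (2 * σ₁) →
      (L / σ₁ - r ≤ ((1 + σ₂ / σ₁) / (1 + 2 * (σ₂ / σ₁))) * (L ^ 2 / σ₁ ^ 2 / (2 * r)) -
          r / (1 + 2 * (σ₂ / σ₁)) ∧
        (((1 + σ₂ / σ₁) / (1 + 2 * (σ₂ / σ₁))) * (L ^ 2 / σ₁ ^ 2 / (2 * r)) -
            r / (1 + 2 * (σ₂ / σ₁)) = L / σ₁ - r → r = L / (2 * σ₁)))) := by
  set b : ℝ := σ₂ / σ₁ with hb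
  set x : ℝ := L / σ₁ with hx
  have hbpos : 0 < b := div_pos h2 h1
  have hxpos : 0 < x := div_pos hL h1
  have hden : 0 < 1 + 2 * b := by linarith
  have hD : 0 < 2 * r * (1 + 2 * b) := by positivity
  have hx2 : L / (2 * σ₁) = x / 2 := by rw [hx]; ring
  have hU : L / 2 * (1 / σ₁ + 1 / σ₂) = (1 + b) * x / (2 * b) := by
    rw [hb, hx]; field_simp; ring
  have key : ((1 + b) / (1 + 2 * b)) * (L ^ 2 / σ₁ ^ 2 / (2 * r)) -
      r / (1 + 2 * b) - (x - r)
      = ((x - 2 * r) * ((1 + b) * x - 2 * b * r)) / (2 * r * (1 + 2 * b)) := by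
    have hL2 : L ^ 2 / σ₁ ^ 2 = x ^ 2 := by rw [hx]; field_simp
    rw [hL2, hx]
    field_simp
    ring
  constructor
  · constructor
    · rintro ⟨ha, hbb⟩
      rw [hx2] at ha
      rw [hU] at hbb
      have h2b : 2 * b * r < (1 + b) * x := by
        rw [lt_div_iff₀ (by positivity)] at hbb; linarith [hbb]
      have hN : (x - 2 * r) * ((1 + b) * x - 2 * b * r) < 0 := by
        apply mul_neg_of_neg_of_pos <;> linarith
      have := div_neg_of_neg_of_pos hN hD
      linarith [key ▸ this]
    · intro h
      have hN : (x - 2 * r) * ((1 + b) * x - 2 * b * r) < 0 := by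
        have h' := h
        have : ((1 + b) / (1 + 2 * b)) * (L ^ 2 / σ₁ ^ 2 / (2 * r)) -
            r / (1 + 2 * b) - (x - r) < 0 := by linarith
        rw [key] at this
        exact (div_neg_iff.mp this).elim (fun ⟨a, c⟩ => absurd c (not_lt.2 hD.le))
          (fun ⟨a, c⟩ => a)
      -- product negative: the only possibility is x - 2r < 0 and second factor > 0
      rcases mul_neg_iff.mp hN with ⟨hp, hq⟩ | ⟨hp, hq⟩
      · -- x - 2r > 0 and (1+b)x - 2br < 0 : contradiction
        exfalso
        nlinarith
      · constructor
        · rw [hx2]; linarith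
        · rw [hU, lt_div_iff₀ (by positivity)]; linarith
  · intro hle
    rw [hx2] at hle
    have hq : 0 < (1 + b) * x - 2 * b * r := by nlinarith
    have hN : 0 ≤ (x - 2 * r) * ((1 + b) * x - 2 * b * r) := by
      apply mul_nonneg (by linarith) hq.le
    have hge := div_nonneg hN hD.le
    rw [← key] at hge
    constructor
    · linarith
    · intro heq
      have : ((x - 2 * r) * ((1 + b) * x - 2 * b * r)) / (2 * r * (1 + 2 * b)) = 0 := by
        rw [← key]; linarith
      have hN0 : (x - 2 * r) * ((1 + b) * x - 2 * b * r) = 0 := by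
        rcases div_eq_zero_iff.mp this with h | h
        · exact h
        · exact absurd h hD.ne'
      rcases mul_eq_zero.mp hN0 with h | h
      · rw [hx2]; linarith
      · exfalso; linarith
end

section
/- With x₁* = (-r, 0, …, 0), x₂* = (r, 0, …, 0), γᵢ = L²/σᵢ², β = σ₂/σ₁, λ₁ = ((1+β)/(1+2β))·γ₁/(2r) - r/(1+2β): if r ∈ (L/(2σ₁), (L/2)(1/σ₁ + 1/σ₂)), then the interval [λ₁, -r + L/σ₁] is contained in (-r, r), and every point of the sphere ∂B(x₁*, L/σ₁) whose first coordinate is at least λ₁ lies in B̄(x₁*, L/σ₁) ∩ B̄(x₂*, L/σ₂) \ {x₁*, x₂*}. -/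
open RealInnerProductSpace

/-- With `x₁* = (-r,0,…,0)`, `x₂* = (r,0,…,0)`, `γ₁ = L²/σ₁²`, `β = σ₂/σ₁`,
`λ₁ = ((1+β)/(1+2β))·γ₁/(2r) - r/(1+2β)`: if `r ∈ (L/(2σ₁), (L/2)(1/σ₁ + 1/σ₂))`, then
`[λ₁, -r + L/σ₁] ⊆ (-r, r)`, and every point of the sphere `∂B(x₁*, L/σ₁)` whose first
coordinate is at least `λ₁` lies in `B̄(x₁*, L/σ₁) ∩ B̄(x₂*, L/σ₂) \ {x₁*, x₂*}`. -/
theorem stmt_12 {n : ℕ} (r σ₁ σ₂ L : ℝ) (hr : 0 < r) (h1 : 0 < σ₁) (h2 : 0 < σ₂) (hL : 0 < L)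
    (hlow : L / (2 * σ₁) < r) (hhigh : r < L / 2 * (1 / σ₁ + 1 / σ₂))
    (x₁s x₂s : EuclideanSpace ℝ (Fin (n + 1)))
    (hx1 : x₁s = EuclideanSpace.single 0 (-r)) (hx2 : x₂s = EuclideanSpace.single 0 r) :
    Set.Icc (((1 + σ₂ / σ₁) / (1 + 2 * (σ₂ / σ₁))) * (L ^ 2 / σ₁ ^ 2 / (2 * r)) -
        r / (1 + 2 * (σ₂ / σ₁))) (-r + L / σ₁) ⊆ Set.Ioo (-r) r ∧
    ∀ x : EuclideanSpace ℝ (Fin (n + 1)), ‖x - x₁s‖ = L / σ₁ →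
      ((1 + σ₂ / σ₁) / (1 + 2 * (σ₂ / σ₁))) * (L ^ 2 / σ₁ ^ 2 / (2 * r)) -
          r / (1 + 2 * (σ₂ / σ₁)) ≤ x 0 →
      ‖x - x₁s‖ ≤ L / σ₁ ∧ ‖x - x₂s‖ ≤ L / σ₂ ∧ x ≠ x₁s ∧ x ≠ x₂s := by
  have hβ : 0 < σ₂ / σ₁ := div_pos h2 h1
  set β : ℝ := σ₂ / σ₁ with hβdef
  set s : ℝ := L / σ₁ with hsdef
  have hs : 0 < s := div_pos hL h1
  have hsσ₂ : L / σ₂ = s / β := by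
    rw [hsdef, hβdef]; field_simp
  have hs2 : L ^ 2 / σ₁ ^ 2 = s ^ 2 := by
    rw [hsdef]; ring
  have h2r : s < 2 * r := by
    rw [div_lt_iff₀ (by positivity)] at hlow
    rw [hsdef, div_lt_iff₀ h1]; linarith
  have hhigh' : 2 * r * β < s * (β + 1) := by
    have key : r * (2 * (σ₁ * σ₂)) < L * (σ₂ + σ₁) := by
      rw [← lt_div_iff₀ (by positivity)]
      calc r < L / 2 * (1 / σ₁ + 1 / σ₂) := hhigh
      _ = L * (σ₂ + σ₁) / (2 * (σ₁ * σ₂)) := by field_simp; try ring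
    rw [show 2 * r * β = 2 * r * σ₂ / σ₁ from by rw [hβdef]; try ring
      ,
      show s * (β + 1) = L * (σ₂ + σ₁) / σ₁ ^ 2 from by rw [hβdef, hsdef]; field_simp; try ring
      ,
      div_lt_div_iff₀ h1 (by positivity)]
    nlinarith [mul_lt_mul_of_pos_right key h1]
  set lam : ℝ := (1 + β) / (1 + 2 * β) * (L ^ 2 / σ₁ ^ 2 / (2 * r)) - r / (1 + 2 * β) with hlam
  clear_value lam s β
  have h12β : (0:ℝ) < 1 + 2 * β := by linarith
  have hlam_gt : -r < lam := by
    have hp : 0 < (1 + β) / (1 + 2 * β) * (L ^ 2 / σ₁ ^ 2 / (2 * r)) := by positivity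
    have hq : r / (1 + 2 * β) ≤ r := div_le_self hr.le (by linarith)
    rw [hlam]; linarith
  have hkey : s ^ 2 - 4 * r * lam ≤ (s / β) ^ 2 := by
    have h4r : (2 * r * β) * (2 * r * β) < (s * (β + 1)) * (s * (β + 1)) :=
      mul_self_lt_mul_self (by positivity) hhigh'
    have e : (s / β) ^ 2 - (s ^ 2 - 4 * r * lam)
        = ((s * (β + 1)) * (s * (β + 1)) - (2 * r * β) * (2 * r * β)) / (β ^ 2 * (1 + 2 * β)) := by
      rw [hlam, hs2]; field_simp; ring
    have hpos : 0 < ((s * (β + 1)) * (s * (β + 1)) - (2 * r * β) * (2 * r * β)) / (β ^ 2 * (1 + 2 * β)) :=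
      div_pos (sub_pos.mpr h4r) (by positivity)
    linarith
  subst hx1 hx2
  refine ⟨?_, ?_⟩
  · intro t ht
    exact ⟨lt_of_lt_of_le hlam_gt ht.1, lt_of_le_of_lt ht.2 (by linarith)⟩
  · intro x hxn hx0
    set y₁ : EuclideanSpace ℝ (Fin (n + 1)) := EuclideanSpace.single 0 (-r) with hy1
    set y₂ : EuclideanSpace ℝ (Fin (n + 1)) := EuclideanSpace.single 0 r with hy2
    have e0 : (x - y₁) 0 = x 0 + r := by
      simp [hy1, PiLp.sub_apply]
    have einner : ⟪x - y₁, y₂ - y₁⟫ = 2 * r * (x 0 + r) := by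
      rw [hy1, hy2, inner_sub_right, EuclideanSpace.inner_single_right,
        EuclideanSpace.inner_single_right]
      simp only [starRingEnd_apply, star_trivial]
      rw [show ((x - EuclideanSpace.single 0 (-r) : EuclideanSpace ℝ (Fin (n+1))) 0) = x 0 + r from e0]
      ring
    have enorm : ‖y₂ - y₁‖ = 2 * r := by
      have h21 : y₂ - y₁ = EuclideanSpace.single (0 : Fin (n+1)) (2 * r) := by
        rw [hy1, hy2]
        ext j
        simp only [PiLp.sub_apply, EuclideanSpace.single_apply]
        split <;> ring
      rw [h21, EuclideanSpace.norm_single, Real.norm_eq_abs, abs_of_pos (by positivity)]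
    have hd : ‖x - y₂‖ ^ 2 = s ^ 2 - 4 * r * x 0 := by
      have e1 : x - y₂ = (x - y₁) - (y₂ - y₁) := by abel
      rw [e1, norm_sub_sq_real, hxn, einner, enorm]
      ring
    have hle2 : ‖x - y₂‖ ^ 2 ≤ (L / σ₂) ^ 2 := by
      rw [hd, hsσ₂]
      have h4 : 4 * r * lam ≤ 4 * r * x 0 := mul_le_mul_of_nonneg_left hx0 (by positivity)
      linarith [hkey, h4]
    have hxne2 : x ≠ y₂ := by
      intro h
      rw [h, enorm] at hxn
      linarith
    have hxne1 : x ≠ y₁ := by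
      intro h
      rw [h, sub_self, norm_zero] at hxn
      exact absurd hxn.symm (ne_of_gt hs)
    refine ⟨le_of_eq hxn, ?_, hxne1, hxne2⟩
    have h2pos : (0:ℝ) ≤ L / σ₂ := by positivity
    calc ‖x - y₂‖ = Real.sqrt (‖x - y₂‖ ^ 2) := (Real.sqrt_sq (norm_nonneg _)).symm
    _ ≤ Real.sqrt ((L / σ₂) ^ 2) := Real.sqrt_le_sqrt hle2
    _ = L / σ₂ := Real.sqrt_sq h2pos
end

section
/- Let n ≥ 2, x*, x₀ ∈ ℝⁿ with x₀ ≠ x*, g ∈ ℝⁿ, and σ > 0. There exists a quadratic function f(x) = ½xᵀQx + bᵀx + c with Q symmetric, minimum eigenvalue λ_min(Q) = σ, minimizer at x* (i.e., Qx* = -b), and ∇f(x₀) = g, if and only if (i) ‖x₀ - x*‖ ≤ ‖g‖/σ and (ii) either g is a positive scalar multiple of x₀ - x* or ∠(g, x₀ - x*) < arccos((σ/‖g‖)‖x₀ - x*‖). -/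
/-!
Write `d = x₀ - x*`, so the requirement is a symmetric `T ⪰ σ` having `σ` as an eigenvalue with
`T d = g`. Then `⟪g, d⟫ ≥ σ‖d‖²`, and in case of equality `d` is killed by the positive operator
`T - σ`, i.e. `g = σ d`. Conversely `g = σ d` is realised by `T = σ`, and `⟪g, d⟫ > σ‖d‖²` by
`T = σ + ⟪w, d⟫⁻¹ w wᵀ` with `w = g - σ d`, whose eigenvalue `σ` is witnessed by any nonzero vector
orthogonal to `w` (this needs `n ≥ 2`). Since `cos ∠(g, d) = ⟪g, d⟫ / (‖g‖ ‖d‖)`, the dichotomy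
"`g = σ d` or `σ‖d‖² < ⟪g, d⟫`" is exactly conditions (i) and (ii).
-/

open InnerProductSpace InnerProductGeometry Real

theorem exists_ne_zero_inner_eq_zero {𝕜 E : Type*} [RCLike 𝕜] [NormedAddCommGroup E]
    [InnerProductSpace 𝕜 E] (hE : 2 ≤ Module.finrank 𝕜 E) (w : E) :
    ∃ v ≠ 0, ⟪w, v⟫_𝕜 = 0 := by
  have : FiniteDimensional 𝕜 E := Module.finite_of_finrank_pos (by omega)
  have hspan : Module.finrank 𝕜 (𝕜 ∙ w) ≤ 1 := by
    simpa using finrank_span_le_card (R := 𝕜) ({w} : Set E)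
  have hsum := (𝕜 ∙ w).finrank_add_finrank_orthogonal
  obtain ⟨v, hv, hv0⟩ := Submodule.exists_mem_ne_zero_of_ne_bot (p := (𝕜 ∙ w)ᗮ) fun hbot ↦ by
    rw [hbot, finrank_bot] at hsum
    omega
  exact ⟨v, hv0, Submodule.inner_right_of_mem_orthogonal (Submodule.mem_span_singleton_self w) hv⟩

section RealInnerProductSpace

variable {E : Type*} [NormedAddCommGroup E] [InnerProductSpace ℝ E]

theorem LinearMap.IsPositive.apply_eq_zero_of_inner_self_eq_zero {S : E →ₗ[ℝ] E}
    (hS : S.IsPositive) {x : E} (hx : ⟪S x, x⟫_ℝ = 0) : S x = 0 := by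
  -- `t ↦ ⟪S (x + t • S x), x + t • S x⟫` is a nonnegative quadratic with discriminant `4 ‖S x‖⁴`.
  have hquad : ∀ t : ℝ, 0 ≤ ⟪S (S x), S x⟫_ℝ * (t * t) + 2 * ‖S x‖ ^ 2 * t + 0 := by
    intro t
    have hsymm : ⟪S (S x), x⟫_ℝ = ⟪S x, S x⟫_ℝ := hS.isSymmetric _ _
    have h := hS.inner_nonneg_left (x + t • S x)
    simp only [map_add, map_smul, inner_add_left, inner_add_right, real_inner_smul_left,
      real_inner_smul_right, hx, hsymm, real_inner_self_eq_norm_sq] at h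
    linarith
  have hdiscr := discrim_le_zero hquad
  rw [discrim] at hdiscr
  have h4 : (‖S x‖ ^ 2) ^ 2 ≤ 0 := by linarith
  simpa using le_antisymm h4 (sq_nonneg _)

theorem LinearMap.IsSymmetric.isPositive_sub_smul_id_iff {T : E →ₗ[ℝ] E} (hT : T.IsSymmetric)
    (σ : ℝ) : (T - σ • LinearMap.id).IsPositive ↔ ∀ v, σ * ‖v‖ ^ 2 ≤ ⟪T v, v⟫_ℝ := by
  have hsymm : (T - σ • LinearMap.id).IsSymmetric :=
    hT.sub (LinearMap.IsSymmetric.id.smul (conj_trivial σ))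
  simp only [LinearMap.IsPositive, hsymm, true_and, LinearMap.sub_apply, LinearMap.smul_apply,
    LinearMap.id_apply, inner_sub_left, real_inner_smul_left, real_inner_self_eq_norm_sq,
    RCLike.re_to_real, sub_nonneg]

theorem LinearMap.IsSymmetric.apply_eq_smul_or_lt_inner {T : E →ₗ[ℝ] E} (hT : T.IsSymmetric)
    {σ : ℝ} (hσ : ∀ v, σ * ‖v‖ ^ 2 ≤ ⟪T v, v⟫_ℝ) (d : E) :
    T d = σ • d ∨ σ * ‖d‖ ^ 2 < ⟪T d, d⟫_ℝ := by
  rcases (hσ d).lt_or_eq with hlt | heq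
  · exact Or.inr hlt
  left
  have hS := (hT.isPositive_sub_smul_id_iff σ).mpr hσ
  have hSd := hS.apply_eq_zero_of_inner_self_eq_zero (x := d) (by
    simp only [LinearMap.sub_apply, LinearMap.smul_apply, LinearMap.id_apply, inner_sub_left,
      real_inner_smul_left, real_inner_self_eq_norm_sq, heq, sub_self])
  simpa [sub_eq_zero] using hSd

theorem exists_isSymmetric_lowestEigenvalue_apply_eq_of_lt_inner
    (hE : 2 ≤ Module.finrank ℝ E) {σ : ℝ} {d g : E} (h : σ * ‖d‖ ^ 2 < ⟪g, d⟫_ℝ) :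
    ∃ T : E →ₗ[ℝ] E, T.IsSymmetric ∧ (∀ v, σ * ‖v‖ ^ 2 ≤ ⟪T v, v⟫_ℝ) ∧
      (∃ v ≠ 0, T v = σ • v) ∧ T d = g := by
  set w := g - σ • d
  have hc : 0 < ⟪w, d⟫_ℝ := by
    simp only [w, inner_sub_left, real_inner_smul_left, real_inner_self_eq_norm_sq]
    linarith
  -- `T = σ + ⟪w, d⟫⁻¹ w wᵀ` acts as `σ` on `wᗮ` and sends `d` to `σ d + w = g`.
  set T : E →ₗ[ℝ] E := σ • LinearMap.id + (⟪w, d⟫_ℝ)⁻¹ • (rankOne ℝ w w : E →ₗ[ℝ] E)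
  have hS : (T - σ • LinearMap.id).IsPositive := by
    rw [add_sub_cancel_left]
    exact (isPositive_rankOne_self w).toLinearMap.smul_of_nonneg (inv_nonneg.mpr hc.le)
  have hT : T.IsSymmetric := by
    simpa using hS.isSymmetric.add (LinearMap.IsSymmetric.id.smul (conj_trivial σ))
  obtain ⟨v, hv0, hwv⟩ := exists_ne_zero_inner_eq_zero hE w
  refine ⟨T, hT, (hT.isPositive_sub_smul_id_iff σ).mp hS, ⟨v, hv0, by simp [T, hwv]⟩, ?_⟩
  change σ • d + (⟪w, d⟫_ℝ)⁻¹ • (⟪w, d⟫_ℝ • w) = g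
  rw [inv_smul_smul₀ hc.ne', add_sub_cancel]

theorem exists_isSymmetric_lowestEigenvalue_apply_eq_iff (hE : 2 ≤ Module.finrank ℝ E)
    (σ : ℝ) (d g : E) :
    (∃ T : E →ₗ[ℝ] E, T.IsSymmetric ∧ (∀ v, σ * ‖v‖ ^ 2 ≤ ⟪T v, v⟫_ℝ) ∧
      (∃ v ≠ 0, T v = σ • v) ∧ T d = g) ↔ g = σ • d ∨ σ * ‖d‖ ^ 2 < ⟪g, d⟫_ℝ := by
  constructor
  · rintro ⟨T, hT, hσ, -, rfl⟩
    exact hT.apply_eq_smul_or_lt_inner hσ d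
  · rintro (rfl | h)
    · have : Nontrivial E := Module.nontrivial_of_finrank_pos (R := ℝ) (by omega)
      obtain ⟨v, hv⟩ := exists_ne (0 : E)
      refine ⟨σ • LinearMap.id, LinearMap.IsSymmetric.id.smul (conj_trivial σ), fun u ↦ ?_,
        ⟨v, hv, rfl⟩, rfl⟩
      simp [real_inner_smul_left]
    · exact exists_isSymmetric_lowestEigenvalue_apply_eq_of_lt_inner hE h

theorem angle_lt_arccos_iff {σ : ℝ} (hσ : 0 ≤ σ) (g d : E) :
    angle g d < arccos (σ / ‖g‖ * ‖d‖) ↔ σ * ‖d‖ ^ 2 < ⟪g, d⟫_ℝ := by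
  rcases eq_or_ne g 0 with rfl | hg
  · simp only [angle_zero_left, norm_zero, div_zero, zero_mul, arccos_zero, lt_self_iff_false,
      inner_zero_left, false_iff, not_lt]
    positivity
  rcases eq_or_ne d 0 with rfl | hd
  · simp
  have hgd : 0 < ‖g‖ * ‖d‖ := by positivity
  have hcos : σ / ‖g‖ * ‖d‖ < ⟪g, d⟫_ℝ / (‖g‖ * ‖d‖) ↔ σ * ‖d‖ ^ 2 < ⟪g, d⟫_ℝ := by
    rw [show σ / ‖g‖ * ‖d‖ = σ * ‖d‖ ^ 2 / (‖g‖ * ‖d‖) by field_simp,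
      div_lt_div_iff_of_pos_right hgd]
  rw [← hcos, angle]
  have hbound := abs_le.mp (abs_real_inner_div_norm_mul_norm_le_one g d)
  have hx : 0 ≤ σ / ‖g‖ * ‖d‖ := by positivity
  exact ⟨antitone_arccos.reflect_lt, fun h ↦ arccos_lt_arccos (by linarith) h hbound.2⟩

theorem mul_norm_le_norm_of_mul_sq_le_inner {σ : ℝ} {g d : E} (h : σ * ‖d‖ ^ 2 ≤ ⟪g, d⟫_ℝ) :
    σ * ‖d‖ ≤ ‖g‖ := by
  rcases eq_or_ne d 0 with rfl | hd
  · simp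
  refine le_of_mul_le_mul_right ?_ (norm_pos_iff.mpr hd)
  nlinarith [real_inner_le_norm g d]

theorem norm_le_div_and_pos_smul_or_angle_lt_arccos_iff {σ : ℝ} (hσ : 0 < σ) {d : E}
    (hd : d ≠ 0) (g : E) :
    (‖d‖ ≤ ‖g‖ / σ ∧ ((∃ k : ℝ, 0 < k ∧ g = k • d) ∨ angle g d < arccos (σ / ‖g‖ * ‖d‖))) ↔
      g = σ • d ∨ σ * ‖d‖ ^ 2 < ⟪g, d⟫_ℝ := by
  rw [le_div_iff₀ hσ, angle_lt_arccos_iff hσ.le, mul_comm ‖d‖ σ]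
  constructor
  · rintro ⟨hnorm, ⟨k, hk, rfl⟩ | hlt⟩
    · have hdn : 0 < ‖d‖ := norm_pos_iff.mpr hd
      rw [norm_smul, Real.norm_of_nonneg hk.le] at hnorm
      rcases (le_of_mul_le_mul_right hnorm hdn).eq_or_lt with rfl | hσk
      · exact Or.inl rfl
      · right
        rw [real_inner_smul_left, real_inner_self_eq_norm_sq]
        gcongr
    · exact Or.inr hlt
  · rintro (rfl | hlt)
    · refine ⟨?_, Or.inl ⟨σ, hσ, rfl⟩⟩
      rw [norm_smul, Real.norm_of_nonneg hσ.le]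
    · exact ⟨mul_norm_le_norm_of_mul_sq_le_inner hlt.le, Or.inr hlt⟩

end RealInnerProductSpace

/-- Let `n ≥ 2`, `x*, x₀ ∈ ℝⁿ` with `x₀ ≠ x*`, `g ∈ ℝⁿ`, `σ > 0`.  There
exists a quadratic function `f(x) = ½xᵀQx + bᵀx + c` with `Q` symmetric, minimum eigenvalue
`λ_min(Q) = σ` (equivalently: `Q ⪰ σI` and `σ` is an eigenvalue of `Q`), minimizer at `x*`
(i.e. `Qx* = -b`, so `∇f(x₀) = Q(x₀ - x*)`), and `∇f(x₀) = g`, if and only if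
(i) `‖x₀ - x*‖ ≤ ‖g‖/σ` and (ii) either `g` is a positive scalar multiple of `x₀ - x*` or
`∠(g, x₀ - x*) < arccos((σ/‖g‖)‖x₀ - x*‖)`. -/
theorem stmt_13 {n : ℕ} (hn : 2 ≤ n) (xs x₀ g : EuclideanSpace ℝ (Fin n))
    (hne : x₀ ≠ xs) (σ : ℝ) (hσ : 0 < σ) :
    (∃ Q : Matrix (Fin n) (Fin n) ℝ, Q.IsSymm ∧
        (∀ v : EuclideanSpace ℝ (Fin n),
          σ * ‖v‖ ^ 2 ≤ (inner ℝ (Matrix.toEuclideanLin Q v) v : ℝ)) ∧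
        (∃ v : EuclideanSpace ℝ (Fin n), v ≠ 0 ∧ Matrix.toEuclideanLin Q v = σ • v) ∧
        Matrix.toEuclideanLin Q (x₀ - xs) = g) ↔
      (‖x₀ - xs‖ ≤ ‖g‖ / σ ∧
        ((∃ k : ℝ, 0 < k ∧ g = k • (x₀ - xs)) ∨
          InnerProductGeometry.angle g (x₀ - xs) <
            Real.arccos (σ / ‖g‖ * ‖x₀ - xs‖))) := by
  have hE : 2 ≤ Module.finrank ℝ (EuclideanSpace ℝ (Fin n)) := by
    rwa [finrank_euclideanSpace_fin]
  rw [norm_le_div_and_pos_smul_or_angle_lt_arccos_iff hσ (sub_ne_zero.mpr hne),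
    ← exists_isSymmetric_lowestEigenvalue_apply_eq_iff hE,
    Matrix.toEuclideanLin.surjective.exists]
  simp only [Matrix.isSymmetric_toEuclideanLin_iff, Matrix.isHermitian_iff_isSymm]
end

section
/- Let x₁* ≠ x₂* in ℝⁿ, σ₁, σ₂, L > 0, and suppose x ∈ B(x₁*, L/σ₁) ∩ B(x₂*, L/σ₂) (open balls), x ∉ {x₁*, x₂*}, and φ̃₁(x) + φ̃₂(x) > ψ(x) where φ̃ᵢ(x) = arccos((σᵢ/L)‖x - xᵢ*‖) and ψ(x) = ∠(x - x₁*, -(x - x₂*)). Then there exists a vector g ∈ ℝⁿ with ‖g‖ = L, ∠(g, x - x₁*) < φ̃₁(x), and ∠(-g, x - x₂*) < φ̃₂(x). -/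
/-!
The two open cones of half-angles `α` and `β` around unit vectors `u` and `v` meet as soon as
`∠(u, v) < α + β ≤ π`: if one axis lies in the other cone take that axis, and otherwise walk
along the great circle from `u` to `v` a distance `t = (∠(u, v) + α - β) / 2`. The point
`w = sin (∠(u, v) - t) • u + sin t • v` of that arc makes angles exactly `t` with `u` and
`∠(u, v) - t` with `v`. In the theorem `α, β` are the arccosines of numbers in `(0, 1)`, so they
lie in `(0, π / 2]`.
-/

open Real InnerProductGeometry
open scoped InnerProductSpace

namespace InnerProductGeometry

variable {V : Type*} [NormedAddCommGroup V] [InnerProductSpace ℝ V]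

theorem angle_eq_of_inner_eq_mul_cos {w u : V} {t : ℝ} (hu : ‖u‖ = 1) (hw : w ≠ 0)
    (h : ⟪w, u⟫_ℝ = ‖w‖ * cos t) (ht₀ : 0 ≤ t) (htπ : t ≤ π) : angle w u = t := by
  rw [angle, h, hu, mul_one, mul_div_cancel_left₀ _ (norm_ne_zero_iff.2 hw), arccos_cos ht₀ htπ]

theorem exists_angle_eq_and_angle_eq_sub {u v : V} (hu : ‖u‖ = 1) (hv : ‖v‖ = 1)
    (hψ₀ : 0 < angle u v) (hψπ : angle u v < π) {t : ℝ} (ht₀ : 0 ≤ t) (ht : t ≤ angle u v) :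
    ∃ w : V, w ≠ 0 ∧ angle w u = t ∧ angle w v = angle u v - t := by
  set ψ := angle u v
  have hsin : 0 < sin ψ := sin_pos_of_pos_of_lt_pi hψ₀ hψπ
  have huv : ⟪u, v⟫_ℝ = cos ψ := by simpa [hu, hv] using (cos_angle u v).symm
  set w := sin (ψ - t) • u + sin t • v
  have hwu : ⟪w, u⟫_ℝ = sin ψ * cos t := by
    simp only [w, inner_add_left, real_inner_smul_left, real_inner_self_eq_norm_sq, hu,
      real_inner_comm u v, huv, sin_sub]
    ring
  have hwv : ⟪w, v⟫_ℝ = sin ψ * cos (ψ - t) := by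
    simp only [w, inner_add_left, real_inner_smul_left, real_inner_self_eq_norm_sq, hv, huv,
      sin_sub, cos_sub]
    linear_combination (-sin t) * sin_sq_add_cos_sq ψ
  have hww : ‖w‖ = sin ψ := by
    have hsq : ‖w‖ ^ 2 = sin ψ ^ 2 := by
      rw [← real_inner_self_eq_norm_sq]
      conv_lhs => rw [show w = sin (ψ - t) • u + sin t • v from rfl]
      rw [inner_add_right, real_inner_smul_right, real_inner_smul_right, hwu, hwv, sin_sub,
        cos_sub]
      linear_combination sin ψ ^ 2 * sin_sq_add_cos_sq t
    nlinarith [norm_nonneg w]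
  have hw : w ≠ 0 := norm_ne_zero_iff.1 (hww ▸ hsin.ne')
  refine ⟨w, hw, ?_, ?_⟩
  · exact angle_eq_of_inner_eq_mul_cos hu hw (hww ▸ hwu) ht₀ (by linarith)
  · exact angle_eq_of_inner_eq_mul_cos hv hw (hww ▸ hwv) (by linarith) (by linarith)

theorem exists_angle_lt_and_angle_lt {u v : V} (hu : u ≠ 0) (hv : v ≠ 0) {α β : ℝ}
    (hα : 0 < α) (hβ : 0 < β) (hαβ : α + β ≤ π) (h : angle u v < α + β) :
    ∃ w : V, w ≠ 0 ∧ angle w u < α ∧ angle w v < β := by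
  by_cases hvα : angle u v < α
  · exact ⟨v, hv, angle_comm u v ▸ hvα, (angle_self hv).symm ▸ hβ⟩
  by_cases huβ : angle u v < β
  · exact ⟨u, hu, (angle_self hu).symm ▸ hα, huβ⟩
  rw [not_lt] at hvα huβ
  have hunit : angle (‖u‖⁻¹ • u) (‖v‖⁻¹ • v) = angle u v := by
    rw [angle_smul_left_of_pos _ _ (inv_pos.2 (norm_pos_iff.2 hu)),
      angle_smul_right_of_pos _ _ (inv_pos.2 (norm_pos_iff.2 hv))]
  obtain ⟨w, hw, hwu, hwv⟩ := exists_angle_eq_and_angle_eq_sub (u := ‖u‖⁻¹ • u)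
    (v := ‖v‖⁻¹ • v) (t := (angle u v + α - β) / 2) (norm_smul_inv_norm hu) (norm_smul_inv_norm hv) (by linarith) (by linarith)
    (by linarith) (by linarith)
  rw [angle_smul_right_of_pos _ _ (inv_pos.2 (norm_pos_iff.2 hu))] at hwu
  rw [angle_smul_right_of_pos _ _ (inv_pos.2 (norm_pos_iff.2 hv)), hunit] at hwv
  exact ⟨w, hw, by linarith, by linarith⟩

end InnerProductGeometry

theorem Real.arccos_pos_of_lt_div {σ L a : ℝ} (hσ : 0 < σ) (hL : 0 < L) (ha : a < L / σ) :
    0 < arccos (σ / L * a) := by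
  rw [arccos_pos, div_mul_eq_mul_div, div_lt_one hL, mul_comm]
  exact (lt_div_iff₀ hσ).1 ha

theorem stmt_15_general {n : ℕ} (σ₁ σ₂ L : ℝ) (h1 : 0 < σ₁) (h2 : 0 < σ₂) (hL : 0 < L)
    (x₁s x₂s x : EuclideanSpace ℝ (Fin n))
    (hb1 : ‖x - x₁s‖ < L / σ₁) (hb2 : ‖x - x₂s‖ < L / σ₂)
    (hx1 : x ≠ x₁s) (hx2 : x ≠ x₂s)
    (hangle : InnerProductGeometry.angle (x - x₁s) (-(x - x₂s)) <
      Real.arccos (σ₁ / L * ‖x - x₁s‖) + Real.arccos (σ₂ / L * ‖x - x₂s‖)) :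
    ∃ g : EuclideanSpace ℝ (Fin n), ‖g‖ = L ∧
      InnerProductGeometry.angle g (x - x₁s) < Real.arccos (σ₁ / L * ‖x - x₁s‖) ∧
      InnerProductGeometry.angle (-g) (x - x₂s) < Real.arccos (σ₂ / L * ‖x - x₂s‖) := by
  have hαβ : arccos (σ₁ / L * ‖x - x₁s‖) + arccos (σ₂ / L * ‖x - x₂s‖) ≤ π := by
    linarith [arccos_le_pi_div_two.2 (by positivity : 0 ≤ σ₁ / L * ‖x - x₁s‖),
      arccos_le_pi_div_two.2 (by positivity : 0 ≤ σ₂ / L * ‖x - x₂s‖)]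
  obtain ⟨w, hw, hw₁, hw₂⟩ := exists_angle_lt_and_angle_lt (sub_ne_zero.2 hx1)
    (neg_ne_zero.2 (sub_ne_zero.2 hx2)) (arccos_pos_of_lt_div h1 hL hb1)
    (arccos_pos_of_lt_div h2 hL hb2) hαβ hangle
  have hc : 0 < L / ‖w‖ := div_pos hL (norm_pos_iff.2 hw)
  refine ⟨(L / ‖w‖) • w, ?_, ?_, ?_⟩
  · rw [norm_smul, norm_of_nonneg hc.le, div_mul_cancel₀ _ (norm_ne_zero_iff.2 hw)]
  · rwa [angle_smul_left_of_pos _ _ hc]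
  · rwa [← angle_neg_neg, neg_neg, angle_smul_left_of_pos _ _ hc]

/-- Let `x₁* ≠ x₂*` in `ℝⁿ`, `σ₁, σ₂, L > 0`, and suppose
`x ∈ B(x₁*, L/σ₁) ∩ B(x₂*, L/σ₂)` (open balls), `x ∉ {x₁*, x₂*}`, and
`φ̃₁(x) + φ̃₂(x) > ψ(x)` where `φ̃ᵢ(x) = arccos((σᵢ/L)‖x - xᵢ*‖)` and
`ψ(x) = ∠(x - x₁*, -(x - x₂*))`.  Then there exists `g ∈ ℝⁿ` with `‖g‖ = L`,
`∠(g, x - x₁*) < φ̃₁(x)` and `∠(-g, x - x₂*) < φ̃₂(x)`. -/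
theorem stmt_15 {n : ℕ} (σ₁ σ₂ L : ℝ) (h1 : 0 < σ₁) (h2 : 0 < σ₂) (hL : 0 < L)
    (x₁s x₂s x : EuclideanSpace ℝ (Fin n)) (hne : x₁s ≠ x₂s)
    (hb1 : ‖x - x₁s‖ < L / σ₁) (hb2 : ‖x - x₂s‖ < L / σ₂)
    (hx1 : x ≠ x₁s) (hx2 : x ≠ x₂s)
    (hangle : InnerProductGeometry.angle (x - x₁s) (-(x - x₂s)) <
      Real.arccos (σ₁ / L * ‖x - x₁s‖) + Real.arccos (σ₂ / L * ‖x - x₂s‖)) :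
    ∃ g : EuclideanSpace ℝ (Fin n), ‖g‖ = L ∧
      InnerProductGeometry.angle g (x - x₁s) < Real.arccos (σ₁ / L * ‖x - x₁s‖) ∧
      InnerProductGeometry.angle (-g) (x - x₂s) < Real.arccos (σ₂ / L * ‖x - x₂s‖) :=
  stmt_15_general σ₁ σ₂ L h1 h2 hL x₁s x₂s x hb1 hb2 hx1 hx2 hangle
end

section
/- Let x₁* = (-r, 0, …, 0), x₂* = (r, 0, …, 0) in ℝⁿ (n ≥ 2), σ₁, σ₂, L > 0 with r = (L/2)(1/σ₁ + 1/σ₂), and let M be the set of all x ∈ ℝⁿ for which there exist differentiable σ₁- and σ₂-strongly convex f₁, f₂ with minimizers x₁*, x₂* such that ∇f₁(x) = -∇f₂(x) and ‖∇f₁(x)‖ ≤ L. Then M = {((L/2)(1/σ₁ - 1/σ₂), 0, …, 0)}, the unique point of tangency of the closed balls B̄(x₁*, L/σ₁) and B̄(x₂*, L/σ₂). -/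
/-!
Since `∇fᵢ` vanishes at the minimizer `xᵢ*`, strong convexity gives
`σᵢ‖x - xᵢ*‖² ≤ ⟪∇fᵢ x, x - xᵢ*⟫ ≤ ‖∇fᵢ x‖ ‖x - xᵢ*‖`, so every point of `M` lies in both closed
balls `B̄(xᵢ*, L/σᵢ)`. Their radii add up to `‖x₂* - x₁*‖ = 2r`, so equality holds in the
triangle inequality, and by strict convexity of the Euclidean norm the balls meet only at the
point dividing the segment `[x₁*, x₂*]` in the ratio `σ₂ : σ₁`. Conversely, the quadratics
`(σᵢ/2)‖x - xᵢ*‖²` have opposite gradients of norm exactly `L` at that point.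
-/

open AffineMap

lemma eq_lineMap_of_dist_le_mul_of_dist_le_mul {E P : Type*} [NormedAddCommGroup E]
    [NormedSpace ℝ E] [StrictConvexSpace ℝ E] [MetricSpace P] [NormedAddTorsor E P]
    {x y z : P} {r : ℝ} (hxy : dist x y ≤ r * dist x z) (hyz : dist y z ≤ (1 - r) * dist x z) :
    y = lineMap x z r := by
  have htri := dist_triangle x y z
  exact eq_lineMap_of_dist_eq_mul_of_dist_eq_mul (by linarith) (by linarith)

lemma PiLp.lineMap_single {ι : Type*} [DecidableEq ι] (p : ENNReal) (i : ι) (a b t : ℝ) :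
    lineMap (PiLp.single p i a : PiLp p fun _ : ι => ℝ) (PiLp.single p i b) t =
      PiLp.single p i (lineMap a b t) := by
  ext j
  by_cases h : j = i <;> simp [h, lineMap_apply_module]

section HalfMulNormSubSq

variable {F : Type*} [NormedAddCommGroup F] [InnerProductSpace ℝ F] [CompleteSpace F]

lemma hasGradientAt_half_mul_norm_sub_sq (σ : ℝ) (c x : F) :
    HasGradientAt (fun y => σ / 2 * ‖y - c‖ ^ 2) (σ • (x - c)) x := by
  rw [hasGradientAt_iff_hasFDerivAt]
  refine ((((hasFDerivAt_id x).sub_const c).norm_sq).const_mul (σ / 2)).congr_fderiv ?_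
  ext w
  simp only [id_eq, map_sub, ContinuousLinearMap.comp_id, smul_apply,
    sub_apply, coe_innerSL_apply, nsmul_eq_mul, Nat.cast_ofNat, smul_eq_mul,
    map_smul, InnerProductSpace.toDual_apply_apply]
  ring

lemma gradient_half_mul_norm_sub_sq (σ : ℝ) (c x : F) :
    gradient (fun y => σ / 2 * ‖y - c‖ ^ 2) x = σ • (x - c) :=
  (hasGradientAt_half_mul_norm_sub_sq σ c x).gradient

lemma differentiable_half_mul_norm_sub_sq (σ : ℝ) (c : F) :
    Differentiable ℝ (fun y => σ / 2 * ‖y - c‖ ^ 2) :=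
  fun x => (hasGradientAt_half_mul_norm_sub_sq σ c x).differentiableAt

end HalfMulNormSubSq

section StronglyConvex

variable {m : ℕ}

lemma stronglyConvex_half_mul_norm_sub_sq (σ : ℝ) (c : EuclideanSpace ℝ (Fin m)) :
    StronglyConvex σ (fun y => σ / 2 * ‖y - c‖ ^ 2) := by
  intro x y
  rw [gradient_half_mul_norm_sub_sq, gradient_half_mul_norm_sub_sq, ← smul_sub,
    sub_sub_sub_cancel_right, real_inner_smul_left, real_inner_self_eq_norm_sq]

lemma StronglyConvex.mul_dist_le_norm_gradient {σ : ℝ} {f : EuclideanSpace ℝ (Fin m) → ℝ}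
    (hf : StronglyConvex σ f) {c : EuclideanSpace ℝ (Fin m)} (hc : IsLocalMin f c)
    (x : EuclideanSpace ℝ (Fin m)) : σ * dist x c ≤ ‖gradient f x‖ := by
  have hc0 : gradient f c = 0 := by rw [gradient, hc.fderiv_eq_zero, map_zero]
  have key : σ * ‖x - c‖ ^ 2 ≤ ‖gradient f x‖ * ‖x - c‖ := by
    simpa only [hc0, sub_zero] using (hf x c).trans (real_inner_le_norm _ _)
  rw [dist_eq_norm]
  rcases (norm_nonneg (x - c)).eq_or_lt with h0 | hpos
  · rw [← h0, mul_zero]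
    exact norm_nonneg _
  · nlinarith

def sumCriticalPoints (σ₁ σ₂ L : ℝ) (a b : EuclideanSpace ℝ (Fin m)) :
    Set (EuclideanSpace ℝ (Fin m)) :=
  {x | ∃ f₁ f₂ : EuclideanSpace ℝ (Fin m) → ℝ,
    Differentiable ℝ f₁ ∧ Differentiable ℝ f₂ ∧
    StronglyConvex σ₁ f₁ ∧ StronglyConvex σ₂ f₂ ∧
    (∀ y, f₁ a ≤ f₁ y) ∧ (∀ y, f₂ b ≤ f₂ y) ∧
    gradient f₁ x = -gradient f₂ x ∧ ‖gradient f₁ x‖ ≤ L}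

variable {σ₁ σ₂ L : ℝ} {a b : EuclideanSpace ℝ (Fin m)}

lemma eq_lineMap_of_mem_sumCriticalPoints (h1 : 0 < σ₁) (h2 : 0 < σ₂)
    (hab : dist a b = L / σ₁ + L / σ₂) {x : EuclideanSpace ℝ (Fin m)}
    (hx : x ∈ sumCriticalPoints σ₁ σ₂ L a b) : x = lineMap a b (σ₂ / (σ₁ + σ₂)) := by
  obtain ⟨f₁, f₂, -, -, hs₁, hs₂, hm₁, hm₂, hgrad, hnorm⟩ := hx
  have hxa : σ₁ * dist x a ≤ L :=
    (hs₁.mul_dist_le_norm_gradient (.of_forall hm₁) x).trans hnorm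
  have hxb : σ₂ * dist x b ≤ L := by
    refine (hs₂.mul_dist_le_norm_gradient (.of_forall hm₂) x).trans ?_
    rwa [← norm_neg, ← hgrad]
  have hra : σ₂ / (σ₁ + σ₂) * (L / σ₁ + L / σ₂) = L / σ₁ := by field_simp; ring
  have hrb : (1 - σ₂ / (σ₁ + σ₂)) * (L / σ₁ + L / σ₂) = L / σ₂ := by field_simp; ring
  apply eq_lineMap_of_dist_le_mul_of_dist_le_mul
  · rwa [dist_comm, hab, hra, le_div_iff₀' h1]
  · rwa [hab, hrb, le_div_iff₀' h2]

lemma lineMap_mem_sumCriticalPoints (h1 : 0 < σ₁) (h2 : 0 < σ₂)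
    (hab : dist a b = L / σ₁ + L / σ₂) :
    lineMap a b (σ₂ / (σ₁ + σ₂)) ∈ sumCriticalPoints σ₁ σ₂ L a b := by
  have hgrad₁ : σ₁ • (lineMap a b (σ₂ / (σ₁ + σ₂)) - a) = (σ₁ * σ₂ / (σ₁ + σ₂)) • (b - a) := by
    rw [← vsub_eq_sub, lineMap_vsub_left, vsub_eq_sub, smul_smul]
    congr 1
    field_simp
  have hgrad₂ : σ₂ • (lineMap a b (σ₂ / (σ₁ + σ₂)) - b) =
      -((σ₁ * σ₂ / (σ₁ + σ₂)) • (b - a)) := by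
    rw [← vsub_eq_sub, lineMap_vsub_right, vsub_eq_sub, smul_smul, ← smul_neg, neg_sub]
    congr 1
    field_simp
    ring
  refine ⟨_, _, differentiable_half_mul_norm_sub_sq σ₁ a,
    differentiable_half_mul_norm_sub_sq σ₂ b, stronglyConvex_half_mul_norm_sub_sq σ₁ a,
    stronglyConvex_half_mul_norm_sub_sq σ₂ b, fun y => ?_, fun y => ?_, ?_, ?_⟩
  iterate 2
    rw [sub_self, norm_zero, zero_pow two_ne_zero, mul_zero]
    positivity
  · rw [gradient_half_mul_norm_sub_sq, gradient_half_mul_norm_sub_sq, hgrad₁, hgrad₂, neg_neg]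
  · rw [gradient_half_mul_norm_sub_sq, hgrad₁, norm_smul, ← dist_eq_norm', hab,
      Real.norm_of_nonneg (by positivity)]
    exact le_of_eq (by field_simp; ring)

theorem sumCriticalPoints_eq_singleton (h1 : 0 < σ₁) (h2 : 0 < σ₂)
    (hab : dist a b = L / σ₁ + L / σ₂) :
    sumCriticalPoints σ₁ σ₂ L a b = {lineMap a b (σ₂ / (σ₁ + σ₂))} :=
  Set.eq_singleton_iff_unique_mem.2
    ⟨lineMap_mem_sumCriticalPoints h1 h2 hab,
      fun _ => eq_lineMap_of_mem_sumCriticalPoints h1 h2 hab⟩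

end StronglyConvex

/-- Let `x₁* = (-r,0,…,0)`, `x₂* = (r,0,…,0)` in `ℝⁿ` (`n ≥ 2`; here the
dimension is `n + 2`), `σ₁, σ₂, L > 0` with `r = (L/2)(1/σ₁ + 1/σ₂)`, and let `M` be the
set of all `x ∈ ℝⁿ` admitting differentiable `σ₁`- and `σ₂`-strongly convex `f₁, f₂` with
minimizers `x₁*, x₂*` such that `∇f₁(x) = -∇f₂(x)` and `‖∇f₁(x)‖ ≤ L`.  Then
`M = {((L/2)(1/σ₁ - 1/σ₂), 0, …, 0)}`, the tangency point of the two closed balls. -/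
theorem stmt_17 {n : ℕ} (r σ₁ σ₂ L : ℝ) (h1 : 0 < σ₁) (h2 : 0 < σ₂) (hL : 0 < L)
    (hrdef : r = L / 2 * (1 / σ₁ + 1 / σ₂))
    (x₁s x₂s : EuclideanSpace ℝ (Fin (n + 2)))
    (hx1 : x₁s = EuclideanSpace.single 0 (-r)) (hx2 : x₂s = EuclideanSpace.single 0 r) :
    {x : EuclideanSpace ℝ (Fin (n + 2)) |
      ∃ f₁ f₂ : EuclideanSpace ℝ (Fin (n + 2)) → ℝ,
        Differentiable ℝ f₁ ∧ Differentiable ℝ f₂ ∧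
        StronglyConvex σ₁ f₁ ∧ StronglyConvex σ₂ f₂ ∧
        (∀ y, f₁ x₁s ≤ f₁ y) ∧ (∀ y, f₂ x₂s ≤ f₂ y) ∧
        gradient f₁ x = -gradient f₂ x ∧ ‖gradient f₁ x‖ ≤ L} =
      {EuclideanSpace.single 0 (L / 2 * (1 / σ₁ - 1 / σ₂))} := by
  have hr : 0 ≤ r := by rw [hrdef]; positivity
  have hdist : dist x₁s x₂s = L / σ₁ + L / σ₂ := by
    rw [hx1, hx2, PiLp.dist_single_same, Real.dist_eq, abs_of_nonpos (by linarith), hrdef]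
    ring
  have htangent : lineMap x₁s x₂s (σ₂ / (σ₁ + σ₂)) =
      EuclideanSpace.single 0 (L / 2 * (1 / σ₁ - 1 / σ₂)) := by
    rw [hx1, hx2, PiLp.lineMap_single, lineMap_apply_ring', hrdef]
    congr 1
    field_simp
    ring
  rw [← htangent]
  exact sumCriticalPoints_eq_singleton h1 h2 hdist
end
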